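/- The individual-based (node-level) closure fails even on a tree: for Markovian SI dynamics with infection rate τ > 0 on the open triplet, started from the pure initial configuration (I, S, S), for every t > 0 one has P_2(I;t) · P_3(S;t) > P_{23}(I,S;t); in particular the product of single-node marginals does not equal the pair marginal. -/

import Mathlib

open Finset

/-- Rate of a single off-diagonal transition for the Markovian SI model with states
`0 = S`, `1 = I`: nonzero only if `y` agrees with `x` except at exactly one node `i`,
where `S → I` occurs at rate `τ · #infectious neighbours`. -/
noncomputable def siRate {V : Type*} [Fintype V] [DecidableEq V] (G : SimpleGraph V)
    [DecidableRel G.Adj] (τ : ℝ) (x y : V → Fin 2) : ℝ :=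
  ∑ i : V,
    (if (∀ j, j ≠ i → x j = y j) ∧ x i = 0 ∧ y i = 1 then
        τ * ((Finset.univ.filter (fun j => G.Adj i j ∧ x j = 1)).card : ℝ) else 0)

/-- Generator matrix of the Markovian SI dynamics on configurations `V → Fin 2`. -/
noncomputable def siGen {V : Type*} [Fintype V] [DecidableEq V] (G : SimpleGraph V)
    [DecidableRel G.Adj] (τ : ℝ) : Matrix (V → Fin 2) (V → Fin 2) ℝ :=
  fun x y => if x = y then -∑ z ∈ Finset.univ.erase x, siRate G τ x z
             else siRate G τ x y

/-- Distribution at time `t` started from the pure configuration `x0`. -/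
noncomputable def siP {V : Type*} [Fintype V] [DecidableEq V] (G : SimpleGraph V)
    [DecidableRel G.Adj] (τ : ℝ) (x0 : V → Fin 2) (t : ℝ) (x : V → Fin 2) : ℝ :=
  NormedSpace.exp (t • siGen G τ) x0 x

/-- Single-node marginal `P_i(A;t)`. -/
noncomputable def siP1 {V : Type*} [Fintype V] [DecidableEq V] (G : SimpleGraph V)
    [DecidableRel G.Adj] (τ : ℝ) (x0 : V → Fin 2) (i : V) (A : Fin 2) (t : ℝ) : ℝ :=
  ∑ x ∈ Finset.univ.filter (fun x : V → Fin 2 => x i = A), siP G τ x0 t x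

/-- Pair marginal `P_{ij}(A,B;t)`. -/
noncomputable def siP2 {V : Type*} [Fintype V] [DecidableEq V] (G : SimpleGraph V)
    [DecidableRel G.Adj] (τ : ℝ) (x0 : V → Fin 2) (i j : V) (A B : Fin 2) (t : ℝ) : ℝ :=
  ∑ x ∈ Finset.univ.filter (fun x : V → Fin 2 => x i = A ∧ x j = B), siP G τ x0 t x

/-- Triple marginal `P_{ijk}(A,B,C;t)`. -/
noncomputable def siP3 {V : Type*} [Fintype V] [DecidableEq V] (G : SimpleGraph V)
    [DecidableRel G.Adj] (τ : ℝ) (x0 : V → Fin 2) (i j k : V) (A B C : Fin 2) (t : ℝ) : ℝ :=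
  ∑ x ∈ Finset.univ.filter (fun x : V → Fin 2 => x i = A ∧ x j = B ∧ x k = C),
    siP G τ x0 t x

/-- The open triplet: the graph on nodes `{0,1,2}` (representing `1,2,3`) with edges
`{0,1}` and `{1,2}`; node `1` is the middle node. -/
def openTriplet : SimpleGraph (Fin 3) where
  Adj i j := i ≠ j ∧ (i = 1 ∨ j = 1)
  symm := ⟨fun _ _ h => ⟨h.1.symm, h.2.symm⟩⟩
  loopless := ⟨fun _ h => h.1 rfl⟩

instance : DecidableRel openTriplet.Adj :=
  fun i j => inferInstanceAs (Decidable (i ≠ j ∧ (i = 1 ∨ j = 1)))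

/-!
Started from `(I, S, S)`, the chain on the open triplet can only move
`(I, S, S) → (I, I, S) → (I, I, I)`, each step at rate `τ`. With `s = τ t` the law at time `t`
therefore puts masses `e^{-s}`, `s e^{-s}` and `1 - (1 + s) e^{-s}` on these three states, so
`P₂(I) = 1 - e^{-s}`, `P₃(S) = (1 + s) e^{-s}` and `P₂₃(I, S) = s e^{-s}`. The strict inequality
`s e^{-s} < (1 - e^{-s}) (1 + s) e^{-s}` is equivalent to `1 + s < e^s`.
-/

section MatrixExp

open NormedSpace

theorem NormedSpace.exp_eq_one_add_of_sq_eq_zero {𝔸 : Type*} [Ring 𝔸] [Algebra ℚ 𝔸]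
    [TopologicalSpace 𝔸] [IsTopologicalRing 𝔸] {x : 𝔸} (hx : x ^ 2 = 0) : exp x = 1 + x := by
  rw [exp_eq_tsum_rat]
  beta_reduce
  rw [tsum_eq_sum (s := Finset.range 2)]
  · simp [Finset.sum_range_succ]
  · intro k hk
    rw [Finset.mem_range, not_lt] at hk
    simp [pow_eq_zero_of_le hk hx]

open scoped Matrix.Norms.Operator in
theorem Matrix.mul_exp_eq_exp_mul {𝕜 m n : Type*} [RCLike 𝕜] [Fintype m] [Fintype n]
    [DecidableEq m] [DecidableEq n] {U : Matrix m n 𝕜} {Q : Matrix n n 𝕜} {M : Matrix m m 𝕜}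
    (h : U * Q = M * U) : U * exp Q = exp M * U := by
  have hpow (k : ℕ) : U * Q ^ k = M ^ k * U := by
    induction k with
    | zero => simp
    | succ k ih => rw [pow_succ, pow_succ, ← Matrix.mul_assoc, ih, Matrix.mul_assoc, h,
        Matrix.mul_assoc]
  have hL := (expSeries_summable' (𝕂 := 𝕜) Q).hasSum.map (mulLeftLinearMap n 𝕜 U)
    (continuous_const.matrix_mul continuous_id)
  have hR := (expSeries_summable' (𝕂 := 𝕜) M).hasSum.map (mulRightLinearMap m 𝕜 U)
    (continuous_id.matrix_mul continuous_const)
  rw [exp_eq_tsum 𝕜, exp_eq_tsum 𝕜]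
  refine hL.unique ?_
  convert hR using 1
  · funext k
    simp [hpow]
  · rfl

theorem Matrix.exp_smul_negJordanBlock_fin_three (s : ℝ) :
    exp (s • !![-1, 1, 0; 0, -1, 0; 0, 0, 0] : Matrix (Fin 3) (Fin 3) ℝ) =
      !![Real.exp (-s), s * Real.exp (-s), 0; 0, Real.exp (-s), 0; 0, 0, 1] := by
  have hsplit : (s • !![-1, 1, 0; 0, -1, 0; 0, 0, 0] : Matrix (Fin 3) (Fin 3) ℝ) =
      diagonal ![-s, -s, 0] + single 0 1 s := by
    ext i j; fin_cases i <;> fin_cases j <;> simp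
  have hcomm : Commute (diagonal ![-s, -s, 0]) (single 0 1 s : Matrix (Fin 3) (Fin 3) ℝ) := by
    ext i j; fin_cases i <;> fin_cases j <;> simp [Matrix.mul_apply, Fin.sum_univ_three]
  have hsq : (single 0 1 s : Matrix (Fin 3) (Fin 3) ℝ) ^ 2 = 0 := by
    simp [sq]
  rw [hsplit, exp_add_of_commute _ _ hcomm, exp_diagonal, exp_eq_one_add_of_sq_eq_zero hsq]
  ext i j; fin_cases i <;> fin_cases j <;>
    simp [Matrix.mul_apply, Fin.sum_univ_three, ← Real.exp_eq_exp_ℝ, mul_comm]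

theorem Matrix.exp_smul_apply_of_linearChain {ι : Type*} [Fintype ι] [DecidableEq ι]
    {Q : Matrix ι ι ℝ} {a b c : ι} {r : ℝ} (ha : Q a = Pi.single b r - Pi.single a r)
    (hb : Q b = Pi.single c r - Pi.single b r) (hc : Q c = 0) (t : ℝ) :
    exp (t • Q) a =
      Pi.single a (Real.exp (-(r * t))) + Pi.single b (r * t * Real.exp (-(r * t)))
        + Pi.single c (1 - Real.exp (-(r * t)) - r * t * Real.exp (-(r * t))) := by
  -- The rows of `U` span a `Q`-invariant space on which `Q` acts by a Jordan block plus zero.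
  let U : Matrix (Fin 3) ι ℝ :=
    Matrix.of ![Pi.single a 1 - Pi.single c 1, Pi.single b 1 - Pi.single c 1, Pi.single c 1]
  have hUQ : U * (t • Q) =
      ((r * t) • (!![-1, 1, 0; 0, -1, 0; 0, 0, 0] : Matrix (Fin 3) (Fin 3) ℝ)) * U := by
    ext i j
    fin_cases i <;>
      simp only [U, Fin.zero_eta, Fin.mk_one, Fin.reduceFinMk, mul_apply, of_apply, smul_apply,
        smul_eq_mul, smul_of, smul_cons, smul_empty, Fin.sum_univ_three, cons_val', cons_val,
        cons_val_zero, cons_val_one, cons_val_fin_one, Pi.sub_apply, Pi.zero_apply,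
        Pi.single_apply, sub_mul, ite_mul, one_mul, zero_mul, sum_sub_distrib, sum_ite_eq',
        mem_univ, if_true, ha, hb, hc] <;>
      split_ifs <;> ring
  have hexp := Matrix.mul_exp_eq_exp_mul hUQ
  rw [Matrix.exp_smul_negJordanBlock_fin_three] at hexp
  funext x
  have h0 := congrFun (congrFun hexp 0) x
  have h2 := congrFun (congrFun hexp 2) x
  simp only [U, mul_apply, of_apply, Fin.sum_univ_three, cons_val', cons_val, cons_val_zero,
    cons_val_one, cons_val_fin_one, Pi.sub_apply, Pi.single_apply, sub_mul, ite_mul, one_mul,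
    zero_mul, sum_sub_distrib, sum_ite_eq', mem_univ, if_true] at h0 h2
  simp only [Pi.add_apply, Pi.single_apply]
  split_ifs at h0 h2 ⊢ <;> linarith

end MatrixExp

/-- `siRate` divided by `τ`, valued in `ℕ` so that concrete rates can be evaluated by `decide`. -/
def siTransitionCount {V : Type*} [Fintype V] [DecidableEq V] (G : SimpleGraph V)
    [DecidableRel G.Adj] (x y : V → Fin 2) : ℕ :=
  ∑ i : V, if (∀ j, j ≠ i → x j = y j) ∧ x i = 0 ∧ y i = 1 then
    #{j | G.Adj i j ∧ x j = 1} else 0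

section SIGenerator

variable {V : Type*} [Fintype V] [DecidableEq V] (G : SimpleGraph V) [DecidableRel G.Adj]
  (τ : ℝ)

theorem siRate_eq_mul_siTransitionCount (x y : V → Fin 2) :
    siRate G τ x y = τ * siTransitionCount G x y := by
  simp [siRate, siTransitionCount, Finset.mul_sum, mul_ite]

theorem siGen_row_of_siTransitionCount {x y : V → Fin 2} (hxy : x ≠ y)
    (h : ∀ z, siTransitionCount G x z = if z = y then 1 else 0) :
    siGen G τ x = Pi.single y τ - Pi.single x τ := by
  funext z
  by_cases hz : x = z
  · subst hz
    simp [siGen, siRate_eq_mul_siTransitionCount, h, hxy, hxy.symm]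
  · simp [siGen, siRate_eq_mul_siTransitionCount, h, hz, Ne.symm hz, Pi.single_apply]

theorem siGen_row_eq_zero_of_forall_eq_one {x : V → Fin 2} (hx : ∀ i, x i = 1) :
    siGen G τ x = 0 := by
  have hrate (y : V → Fin 2) : siRate G τ x y = 0 := by simp [siRate, hx]
  funext z
  simp only [siGen, hrate, Finset.sum_const_zero, neg_zero, ite_self, Pi.zero_apply]

end SIGenerator

theorem openTriplet_siTransitionCount_ISS (y : Fin 3 → Fin 2) :
    siTransitionCount openTriplet ![1, 0, 0] y = if y = ![1, 1, 0] then 1 else 0 := by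
  revert y; decide

theorem openTriplet_siTransitionCount_IIS (y : Fin 3 → Fin 2) :
    siTransitionCount openTriplet ![1, 1, 0] y = if y = ![1, 1, 1] then 1 else 0 := by
  revert y; decide

theorem openTriplet_siP_ISS (τ t : ℝ) :
    siP openTriplet τ ![1, 0, 0] t =
      Pi.single ![1, 0, 0] (Real.exp (-(τ * t)))
        + Pi.single ![1, 1, 0] (τ * t * Real.exp (-(τ * t)))
        + Pi.single ![1, 1, 1] (1 - Real.exp (-(τ * t)) - τ * t * Real.exp (-(τ * t))) :=
  Matrix.exp_smul_apply_of_linearChain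
    (siGen_row_of_siTransitionCount _ _ (by decide) openTriplet_siTransitionCount_ISS)
    (siGen_row_of_siTransitionCount _ _ (by decide) openTriplet_siTransitionCount_IIS)
    (siGen_row_eq_zero_of_forall_eq_one _ _ (by decide)) t

theorem Real.mul_exp_neg_lt_one_sub_exp_neg_mul {s : ℝ} (hs : 0 < s) :
    s * exp (-s) < (1 - exp (-s)) * (exp (-s) + s * exp (-s)) := by
  have h : exp (-s) * (1 + s) < 1 := by
    rw [exp_neg, inv_mul_lt_iff₀ (exp_pos s)]
    linarith [add_one_lt_exp hs.ne']
  nlinarith [mul_pos (exp_pos (-s)) (sub_pos.2 h)]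

/-- The individual-based (node-level) closure fails even on a tree: for Markovian SI dynamics
on the open triplet started from `(I,S,S)`, for every `t > 0` the product of single-node
marginals strictly exceeds the pair marginal: `P₂(I;t) · P₃(S;t) > P₂₃(I,S;t)`. -/
theorem si_individual_closure_fails
    (τ : ℝ) (hτ : 0 < τ) (t : ℝ) (ht : 0 < t) :
    siP2 openTriplet τ ![1, 0, 0] 1 2 1 0 t
      < siP1 openTriplet τ ![1, 0, 0] 1 1 t * siP1 openTriplet τ ![1, 0, 0] 2 0 t := by
  have hIS : siP2 openTriplet τ ![1, 0, 0] 1 2 1 0 t = τ * t * Real.exp (-(τ * t)) := by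
    simp [siP2, openTriplet_siP_ISS, Finset.sum_add_distrib, Finset.sum_pi_single']
  have hI : siP1 openTriplet τ ![1, 0, 0] 1 1 t = 1 - Real.exp (-(τ * t)) := by
    simp [siP1, openTriplet_siP_ISS, Finset.sum_add_distrib, Finset.sum_pi_single']
  have hS : siP1 openTriplet τ ![1, 0, 0] 2 0 t =
      Real.exp (-(τ * t)) + τ * t * Real.exp (-(τ * t)) := by
    simp [siP1, openTriplet_siP_ISS, Finset.sum_add_distrib, Finset.sum_pi_single']
  rw [hIS, hI, hS]
  exact Real.mul_exp_neg_lt_one_sub_exp_neg_mul (mul_pos hτ ht)
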